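/- Let S be an ordered semigroup. Suppose that X ∩ Q ∩ Y ⊆ (YQX] for every right ideal X, every left ideal Y, and every quasi-ideal Q of S. Then S is intra-regular. -/

import Mathlib

/-! Apply the hypothesis with `X = Q = (a ∪ aS]`, a right ideal and hence a quasi-ideal, and
`Y = (a ∪ Sa]`. From `a ∈ X ∩ Q ∩ Y` we get `a ≤ y q x` with `y ∈ Y`, `q ∈ Q`, hence
`a ≤ y a w` for some `w`. If `y ≤ s a` this already reads `a ≤ s a² w`; if `y ≤ a`, then
`a ≤ a a w`, and substituting this bound for the first factor gives `a ≤ a a² w²`. -/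

open Pointwise

/-- The "downward closure" `(A] = {t | t ≤ a for some a ∈ A}`. -/
def dcl {S : Type*} [LE S] (A : Set S) : Set S := {t | ∃ a ∈ A, t ≤ a}

section OrderedSemigroup

variable {S : Type*} [Semigroup S] [Preorder S]

structure IsRightIdeal (X : Set S) : Prop where
  nonempty : X.Nonempty
  mul_univ_subset : X * Set.univ ⊆ X
  dcl_subset : dcl X ⊆ X

structure IsLeftIdeal (Y : Set S) : Prop where
  nonempty : Y.Nonempty
  univ_mul_subset : Set.univ * Y ⊆ Y
  dcl_subset : dcl Y ⊆ Y

structure IsQuasiIdeal (Q : Set S) : Prop where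
  nonempty : Q.Nonempty
  dcl_inter_subset : dcl (Q * Set.univ) ∩ dcl (Set.univ * Q) ⊆ Q
  dcl_subset : dcl Q ⊆ Q

omit [Semigroup S] in
lemma dcl_mono {A B : Set S} (h : A ⊆ B) : dcl A ⊆ dcl B :=
  fun _ ⟨b, hb, htb⟩ => ⟨b, h hb, htb⟩

lemma IsRightIdeal.isQuasiIdeal {X : Set S} (hX : IsRightIdeal X) : IsQuasiIdeal X where
  nonempty := hX.nonempty
  dcl_inter_subset := fun _ ht => hX.dcl_subset (dcl_mono hX.mul_univ_subset ht.1)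
  dcl_subset := hX.dcl_subset

def principalRightIdeal (a : S) : Set S := {t | t ≤ a ∨ ∃ s, t ≤ a * s}

def principalLeftIdeal (a : S) : Set S := {t | t ≤ a ∨ ∃ s, t ≤ s * a}

lemma self_mem_principalRightIdeal (a : S) : a ∈ principalRightIdeal a := Or.inl le_rfl

lemma self_mem_principalLeftIdeal (a : S) : a ∈ principalLeftIdeal a := Or.inl le_rfl

lemma exists_mul_le_mul_of_mem_principalRightIdeal [MulRightMono S] {a q : S}
    (hq : q ∈ principalRightIdeal a) (x : S) : ∃ w, q * x ≤ a * w := by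
  rcases hq with hq | ⟨s, hs⟩
  · exact ⟨x, mul_le_mul_left hq x⟩
  · exact ⟨s * x, by simpa only [mul_assoc] using mul_le_mul_left hs x⟩

lemma isRightIdeal_principalRightIdeal [MulRightMono S] (a : S) :
    IsRightIdeal (principalRightIdeal a) where
  nonempty := ⟨a, self_mem_principalRightIdeal a⟩
  mul_univ_subset := by
    rintro _ ⟨q, hq, x, -, rfl⟩
    exact Or.inr (exists_mul_le_mul_of_mem_principalRightIdeal hq x)
  dcl_subset := by
    rintro t ⟨b, hb | ⟨s, hs⟩, htb⟩
    · exact Or.inl (htb.trans hb)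
    · exact Or.inr ⟨s, htb.trans hs⟩

lemma isLeftIdeal_principalLeftIdeal [MulLeftMono S] (a : S) :
    IsLeftIdeal (principalLeftIdeal a) where
  nonempty := ⟨a, self_mem_principalLeftIdeal a⟩
  univ_mul_subset := by
    rintro _ ⟨x, -, q, hq | ⟨s, hs⟩, rfl⟩
    · exact Or.inr ⟨x, mul_le_mul_right hq x⟩
    · exact Or.inr ⟨x * s, by simpa only [mul_assoc] using mul_le_mul_right hs x⟩
  dcl_subset := by
    rintro t ⟨b, hb | ⟨s, hs⟩, htb⟩
    · exact Or.inl (htb.trans hb)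
    · exact Or.inr ⟨s, htb.trans hs⟩

variable [MulLeftMono S] [MulRightMono S]

lemma exists_le_mul_sq_mul_of_le_sq_mul {a v : S} (h : a ≤ a * a * v) :
    ∃ x y : S, a ≤ x * (a * a) * y :=
  ⟨a, v * v, calc
    a ≤ a * a * v := h
    _ ≤ a * (a * a * v) * v := mul_le_mul_left (mul_le_mul_right h a) v
    _ = a * (a * a) * (v * v) := by simp only [mul_assoc]⟩

lemma exists_le_mul_sq_mul_of_le_mul_mul {a y w : S} (hy : y ∈ principalLeftIdeal a)
    (h : a ≤ y * a * w) : ∃ x y : S, a ≤ x * (a * a) * y := by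
  rcases hy with hy | ⟨s, hs⟩
  · exact exists_le_mul_sq_mul_of_le_sq_mul (h.trans (mul_le_mul_left (mul_le_mul_left hy a) w))
  · refine ⟨s, w, h.trans ?_⟩
    simpa only [mul_assoc] using mul_le_mul_left (mul_le_mul_left hs a) w

end OrderedSemigroup

/-- If `X ∩ Q ∩ Y ⊆ (YQX]` for every right ideal X, left ideal Y and
quasi-ideal Q, then S is intra-regular. -/
theorem sufficient_condition_intra_regular {S : Type*} [Semigroup S] [PartialOrder S]
    [CovariantClass S S (· * ·) (· ≤ ·)]
    [CovariantClass S S (Function.swap (· * ·)) (· ≤ ·)]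
    (h : ∀ X Y Q : Set S,
      X.Nonempty → X * Set.univ ⊆ X → dcl X ⊆ X →
      Y.Nonempty → Set.univ * Y ⊆ Y → dcl Y ⊆ Y →
      Q.Nonempty → dcl (Q * Set.univ) ∩ dcl (Set.univ * Q) ⊆ Q → dcl Q ⊆ Q →
      X ∩ Q ∩ Y ⊆ dcl (Y * Q * X)) :
    ∀ a : S, ∃ x y : S, a ≤ x * (a * a) * y := by
  intro a
  have hR := isRightIdeal_principalRightIdeal a
  have hL := isLeftIdeal_principalLeftIdeal a
  have hQ := hR.isQuasiIdeal
  obtain ⟨_, ⟨_, ⟨y, hy, q, hq, rfl⟩, x, -, rfl⟩, hle⟩ :=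
    h _ _ _ hR.nonempty hR.mul_univ_subset hR.dcl_subset
      hL.nonempty hL.univ_mul_subset hL.dcl_subset
      hQ.nonempty hQ.dcl_inter_subset hQ.dcl_subset
      ⟨⟨self_mem_principalRightIdeal a, self_mem_principalRightIdeal a⟩,
        self_mem_principalLeftIdeal a⟩
  obtain ⟨w, hw⟩ := exists_mul_le_mul_of_mem_principalRightIdeal hq x
  refine exists_le_mul_sq_mul_of_le_mul_mul (w := w) hy (hle.trans ?_)
  simpa only [mul_assoc] using mul_le_mul_right hw y
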